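/- arXiv:2001.09013 — 2 statements merged into one kernel-verified Lean document; each statement's English description precedes it below -/
import Mathlib

section
/- Under the hypotheses of the convergence theorem for the fast adaptive gradient method with μ = m = 0, constant errors δ_k = δ and δ̃_k = δ̃ for all k, and with L_k ≤ 2·L for all k = 1, …, N for some L > 0, one has for all N ≥ 1: f(x_N) − f(x⋆) ≤ 8·L·V[x₀](x⋆)/N² + 2·N·δ + 8·L·δ̃/N. -/
open RealInnerProductSpace Finset

/-- The Bregman divergence `V[y](x) = d(x) - d(y) - ⟪∇d(y), x - y⟫` generated by `d`
with gradient map `Dd`. -/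
noncomputable def breg {E : Type*} [NormedAddCommGroup E] [InnerProductSpace ℝ E]
    (d : E → ℝ) (Dd : E → E) (y x : E) : ℝ :=
  d x - d y - ⟪Dd y, x - y⟫

/-- `g` is a subgradient of `ψ` at `z` (relative to the set `Q`). -/
def IsSubgradOn {E : Type*} [NormedAddCommGroup E] [InnerProductSpace ℝ E]
    (Q : Set E) (ψ : E → ℝ) (z g : E) : Prop :=
  ∀ x ∈ Q, ψ z + ⟪g, x - z⟫ ≤ ψ x

/-- `ψ` is `m`-strongly convex relative to `d` on `Q`, where `V` is the Bregman
divergence generated by `d`. -/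
def StrongRelConvexOn {E : Type*} [NormedAddCommGroup E] [InnerProductSpace ℝ E]
    (Q : Set E) (V : E → E → ℝ) (m : ℝ) (ψ : E → ℝ) : Prop :=
  ∀ z ∈ Q, ∀ g : E, IsSubgradOn Q ψ z g → ∀ x ∈ Q, ψ z + ⟪g, x - z⟫ + m * V z x ≤ ψ x

/-- `y` is a `δ`-approximate minimizer of `Ψ` on `Q`: there exists a subgradient `h`
of `Ψ` at `y` such that `⟪h, x - y⟫ ≥ -δ` for all `x ∈ Q`. -/
def IsApproxMinOn {E : Type*} [NormedAddCommGroup E] [InnerProductSpace ℝ E]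
    (Q : Set E) (Ψ : E → ℝ) (δ : ℝ) (y : E) : Prop :=
  y ∈ Q ∧ ∃ h : E, IsSubgradOn Q Ψ y h ∧ ∀ x ∈ Q, -δ ≤ ⟪h, x - y⟫

/-!
Every iteration satisfies the estimate-sequence inequality
`A_{k+1} f(x_{k+1}) + V[u_{k+1}](x) ≤ A_k f(x_k) + V[u_k](x) + α_{k+1} f(x) + 2 A_{k+1} δ + δ̃`
for each `x ∈ Q`. It combines the upper model bound at `x_{k+1}`, convexity of `ψ_k` at the
convex combination `x_{k+1} = (A_k x_k + α_{k+1} u_{k+1}) / A_{k+1}`, the identity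
`A_{k+1} L_{k+1} ‖x_{k+1} - y_{k+1}‖² = ‖u_{k+1} - u_k‖² ≤ 2 V[u_k](u_{k+1})`, and the
three-point inequality of the inexact prox-step, which comes from the sum rule
`∂(g + s) ⊆ ∂g + ∇s` for differentiable `s`. Telescoping gives
`A_N (f(x_N) - f(x)) ≤ V[x₀](x) + N (2 δ A_N + δ̃)`, while
`A_{k+1} = L_{k+1} α_{k+1}² ≤ 2L α_{k+1}²` makes `√A_k` grow by at least `1 / (2√(2L))` per
step, so that `A_N ≥ N² / (8L)`.
-/

section Subgradient

variable {E : Type*} [NormedAddCommGroup E] [InnerProductSpace ℝ E] [CompleteSpace E]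

theorem HasGradientAt.hasDerivAt_comp_add_smul {s : E → ℝ} {s' u : E}
    (hs : HasGradientAt s s' u) (v : E) : HasDerivAt (fun t : ℝ => s (u + t • v)) ⟪s', v⟫ 0 := by
  have hline : HasDerivAt (fun t : ℝ => u + t • v) v 0 := by
    simpa using ((hasDerivAt_id (0 : ℝ)).smul_const v).const_add u
  have hs' : HasFDerivAt s (InnerProductSpace.toDual ℝ E s') (u + (0 : ℝ) • v) := by
    simpa using hasGradientAt_iff_hasFDerivAt.mp hs
  have hcomp := hs'.comp_hasDerivAt 0 hline
  rw [InnerProductSpace.toDual_apply_apply] at hcomp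
  exact hcomp

theorem IsSubgradOn.sub_of_hasGradientAt {Q : Set E} (hQ : Convex ℝ Q) {g s : E → ℝ}
    (hg : ConvexOn ℝ Q g) {u h s' : E} (hu : u ∈ Q) (hs : HasGradientAt s s' u)
    (hsub : IsSubgradOn Q (fun z => g z + s z) u h) : IsSubgradOn Q g u (h - s') := by
  intro w hw
  set D := g w - g u - ⟪h, w - u⟫
  have hφ : HasDerivAt (fun t : ℝ => t * D + s (u + t • (w - u))) (D + ⟪s', w - u⟫) 0 :=
    (hasDerivAt_mul_const D).fun_add (hs.hasDerivAt_comp_add_smul (w - u))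
  -- The subgradient inequality at `u + t (w - u)` and convexity of `g` make `0` a minimum on
  -- `[0, 1]`; Fermat's rule at this endpoint then gives `D + ⟪s', w - u⟫ ≥ 0`.
  have hmin : IsLocalMinOn (fun t : ℝ => t * D + s (u + t • (w - u))) (Set.Icc 0 1) 0 := by
    refine Filter.eventually_of_mem self_mem_nhdsWithin fun t ⟨ht0, ht1⟩ => ?_
    have hz : u + t • (w - u) = (1 - t) • u + t • w := by module
    have hzQ : u + t • (w - u) ∈ Q := hz ▸ hQ hu hw (sub_nonneg.2 ht1) ht0 (sub_add_cancel 1 t)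
    have hsubt := hsub _ hzQ
    have hgt := hg.2 hu hw (sub_nonneg.2 ht1) ht0 (sub_add_cancel 1 t)
    rw [← hz, smul_eq_mul, smul_eq_mul] at hgt
    simp only [add_sub_cancel_left, inner_smul_right] at hsubt
    simp only [zero_mul, zero_smul, add_zero, zero_add]
    nlinarith
  have hderiv := hmin.hasFDerivWithinAt_nonneg hφ.hasFDerivAt.hasFDerivWithinAt
    (sub_mem_posTangentConeAt_of_segment_subset (segment_eq_Icc zero_le_one).subset)
  simp only [sub_zero, ContinuousLinearMap.toSpanSingleton_apply, one_smul] at hderiv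
  rw [inner_sub_left]
  linarith

end Subgradient

section Bregman

variable {E : Type*} [NormedAddCommGroup E] [InnerProductSpace ℝ E] [CompleteSpace E]
  {d : E → ℝ} {Dd : E → E}

theorem hasGradientAt_breg {u : E} (hd : HasGradientAt d (Dd u) u) (b : E) :
    HasGradientAt (breg d Dd b) (Dd u - Dd b) u := by
  rw [hasGradientAt_iff_hasFDerivAt, map_sub]
  have hlin : HasFDerivAt (fun x => ⟪Dd b, x - b⟫) (InnerProductSpace.toDual ℝ E (Dd b)) u := by
    simpa [inner_sub_right] using
      ((InnerProductSpace.toDual ℝ E (Dd b)).hasFDerivAt).sub_const ⟪Dd b, b⟫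
  exact ((hasGradientAt_iff_hasFDerivAt.mp hd).sub_const (d b)).sub hlin

theorem IsApproxMinOn.add_breg_le {Q : Set E} (hQ : Convex ℝ Q) {ψ : E → ℝ}
    (hψ : ConvexOn ℝ Q ψ) {a δ : ℝ} (ha : 0 ≤ a) {b u w : E} (hd : HasGradientAt d (Dd u) u)
    (happ : IsApproxMinOn Q (fun z => a * ψ z + breg d Dd b z) δ u) (hw : w ∈ Q) :
    a * ψ u + breg d Dd b u + breg d Dd u w ≤ a * ψ w + breg d Dd b w + δ := by
  obtain ⟨hu, h, hsub, hlow⟩ := happ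
  have hψsub := hsub.sub_of_hasGradientAt hQ (hψ.smul ha) hu (hasGradientAt_breg hd b) w hw
  have hδ := hlow w hw
  simp only [smul_eq_mul, breg, inner_sub_left, inner_sub_right] at hψsub hδ ⊢
  linarith

end Bregman

section Step

variable {E : Type*} [NormedAddCommGroup E] [InnerProductSpace ℝ E]

theorem ConvexOn.mul_apply_smul_add_le {Q : Set E} {ψ : E → ℝ} (hψ : ConvexOn ℝ Q ψ)
    {a α : ℝ} (ha : 0 ≤ a) (hα : 0 < α) {x u : E} (hx : x ∈ Q) (hu : u ∈ Q) :
    (a + α) * ψ ((a + α)⁻¹ • (α • u + a • x)) ≤ a * ψ x + α * ψ u := by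
  have hA : 0 < a + α := by positivity
  have hcomb : (a + α)⁻¹ • (α • u + a • x) = (a / (a + α)) • x + (α / (a + α)) • u := by
    match_scalars <;> field_simp
  have h := hψ.2 hx hu (div_nonneg ha hA.le) (div_nonneg hα.le hA.le) (by field_simp)
  rw [← hcomb, smul_eq_mul, smul_eq_mul] at h
  calc (a + α) * ψ ((a + α)⁻¹ • (α • u + a • x))
      ≤ (a + α) * (a / (a + α) * ψ x + α / (a + α) * ψ u) := mul_le_mul_of_nonneg_left h hA.le
    _ = a * ψ x + α * ψ u := by field_simp

theorem fastGradient_step_le {Q : Set E} {V : E → E → ℝ} {f ψ : E → ℝ}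
    {a A α Lk c δ δt : ℝ} {x u u' y x' w : E}
    (ha : 0 ≤ a) (hα : 0 < α) (hA : A = a + α) (hroot : Lk * α ^ 2 = A)
    (hy : y = A⁻¹ • (α • u + a • x)) (hx' : x' = A⁻¹ • (α • u' + a • x))
    (hxQ : x ∈ Q) (hu'Q : u' ∈ Q) (hw : w ∈ Q)
    (hψ : ConvexOn ℝ Q ψ) (hlow : ∀ z ∈ Q, c + ψ z ≤ f z)
    (hsc : 1 / 2 * ‖u' - u‖ ^ 2 ≤ V u u')
    (hprox : α * ψ u' + V u u' + V u' w ≤ α * ψ w + V u w + δt)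
    (hupper : f x' ≤ c + ψ x' + Lk / 2 * ‖x' - y‖ ^ 2 + 2 * δ) :
    A * f x' + V u' w ≤ a * f x + V u w + (A - a) * f w + 2 * A * δ + δt := by
  subst hA
  have hApos : 0 < a + α := by positivity
  have hgap : x' - y = (α / (a + α)) • (u' - u) := by
    rw [hx', hy]
    match_scalars <;> field_simp
    ring
  have hquad : (a + α) * (Lk / 2 * ‖x' - y‖ ^ 2) = 1 / 2 * ‖u' - u‖ ^ 2 := by
    rw [hgap, norm_smul, mul_pow, Real.norm_eq_abs, sq_abs, div_pow]
    field_simp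
    rw [← hroot]
    ring
  have hconv : (a + α) * ψ x' ≤ a * ψ x + α * ψ u' :=
    hx' ▸ hψ.mul_apply_smul_add_le ha hα hxQ hu'Q
  have hfx := mul_le_mul_of_nonneg_left (hlow x hxQ) ha
  have hfw := mul_le_mul_of_nonneg_left (hlow w hw) hα.le
  have hfx' := mul_le_mul_of_nonneg_left hupper hApos.le
  linear_combination hfx' + hconv + hsc + hprox + hfx + hfw + hquad

end Step

theorem one_le_two_sqrt_mul_sub_sqrt {C a b : ℝ} (ha : 0 ≤ a) (hab : a < b)
    (h : b ≤ C * (b - a) ^ 2) : 1 ≤ 2 * √C * (√b - √a) := by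
  have hb : 0 < b := ha.trans_lt hab
  have hC : 0 ≤ C := by
    by_contra! hC
    nlinarith [mul_nonpos_of_nonpos_of_nonneg hC.le (sq_nonneg (b - a))]
  have hsb : 0 < √b := Real.sqrt_pos.2 hb
  have hsab : √a ≤ √b := Real.sqrt_le_sqrt hab.le
  have hroot : √b ≤ √C * (b - a) := by
    simpa [Real.sqrt_mul hC, Real.sqrt_sq (sub_nonneg.2 hab.le)] using Real.sqrt_le_sqrt h
  have hdiff : b - a = (√b - √a) * (√b + √a) := by
    linear_combination Real.sq_sqrt ha - Real.sq_sqrt hb.le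
  nlinarith [Real.sqrt_nonneg C, Real.sqrt_nonneg a]

theorem sq_le_four_mul_of_le_mul_sq_sub {A : ℕ → ℝ} {C : ℝ} {n : ℕ} (hC : 0 ≤ C) (h0 : A 0 = 0)
    (hlt : ∀ k < n, A k < A (k + 1)) (hstep : ∀ k < n, A (k + 1) ≤ C * (A (k + 1) - A k) ^ 2) :
    (n : ℝ) ^ 2 ≤ 4 * C * A n := by
  have key : ∀ k ≤ n, 0 ≤ A k ∧ (k : ℝ) ≤ 2 * √C * √(A k) := by
    intro k hk
    induction k with
    | zero => simp [h0]
    | succ k ih =>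
      obtain ⟨hAk, hk'⟩ := ih (by omega)
      have := one_le_two_sqrt_mul_sub_sqrt hAk (hlt k hk) (hstep k hk)
      exact ⟨hAk.trans (hlt k hk).le, by push_cast; linarith⟩
  obtain ⟨hAn, hn⟩ := key n le_rfl
  calc (n : ℝ) ^ 2 ≤ (2 * √C * √(A n)) ^ 2 := pow_le_pow_left₀ (Nat.cast_nonneg n) hn 2
    _ = 4 * C * A n := by rw [mul_pow, mul_pow, Real.sq_sqrt hC, Real.sq_sqrt hAn]; ring

theorem mul_sub_add_le_of_forall_step_le {A F D : ℕ → ℝ} {Fs δ δt : ℝ} {n : ℕ} (h0 : A 0 = 0)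
    (hδ : 0 ≤ δ) (hmono : ∀ k < n, A k ≤ A (k + 1))
    (hstep : ∀ k < n, A (k + 1) * F (k + 1) + D (k + 1) ≤
      A k * F k + D k + (A (k + 1) - A k) * Fs + 2 * A (k + 1) * δ + δt) :
    A n * (F n - Fs) + D n ≤ D 0 + n * (2 * δ * A n + δt) := by
  induction n with
  | zero => simp [h0]
  | succ k ih =>
    have ih := ih (fun i hi => hmono i (by omega)) (fun i hi => hstep i (by omega))
    have hδA : k * δ * A k ≤ k * δ * A (k + 1) :=
      mul_le_mul_of_nonneg_left (hmono k (by omega)) (by positivity)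
    push_cast
    linarith [hstep k (by omega)]

theorem sub_le_of_mul_sub_add_le {A N Lb V₀ V F Fs δ δt : ℝ} (hN : 0 < N) (hLb : 0 ≤ Lb)
    (hAN : N ^ 2 ≤ 8 * Lb * A) (hV₀ : 0 ≤ V₀) (hV : 0 ≤ V) (hδt : 0 ≤ δt)
    (h : A * (F - Fs) + V ≤ V₀ + N * (2 * δ * A + δt)) :
    F - Fs ≤ 8 * Lb * V₀ / N ^ 2 + 2 * N * δ + 8 * Lb * δt / N := by
  have hA : 0 < A := pos_of_mul_pos_right ((pow_pos hN 2).trans_le hAN) (by positivity)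
  have hnum : 0 ≤ V₀ + N * δt := by positivity
  calc F - Fs ≤ (V₀ + N * δt) / A + 2 * N * δ := by
        rw [div_add' _ _ _ hA.ne', le_div_iff₀ hA]
        linarith
    _ ≤ 8 * Lb * (V₀ + N * δt) / N ^ 2 + 2 * N * δ := by
        gcongr ?_ + _
        rw [div_le_div_iff₀ hA (by positivity)]
        nlinarith [mul_le_mul_of_nonneg_left hAN hnum]
    _ = 8 * Lb * V₀ / N ^ 2 + 2 * N * δ + 8 * Lb * δt / N := by
        field_simp
        ring

theorem stmt10_general
    {E : Type*} [NormedAddCommGroup E] [InnerProductSpace ℝ E] [FiniteDimensional ℝ E]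
    (Q : Set E) (hQ : Convex ℝ Q)
    (d : E → ℝ) (Dd : E → E)
    (hd_diff : ∀ x, HasGradientAt d (Dd x) x)
    (f : E → ℝ) (δ δt Lb : ℝ) (hδ : 0 ≤ δ) (hδt : 0 ≤ δt) (hLb : 0 < Lb)
    (N : ℕ) (hN : 1 ≤ N)
    (x u y : ℕ → E) (A α L : ℕ → ℝ)
    (hxQ : ∀ k ≤ N, x k ∈ Q) (huQ : ∀ k ≤ N, u k ∈ Q)
    (hA0 : A 0 = 0) (hu0 : u 0 = x 0)
    (hα : ∀ k < N, 0 < α (k + 1))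
    (hArec : ∀ k < N, A (k + 1) = A k + α (k + 1))
    (hLle : ∀ k < N, L (k + 1) ≤ 2 * Lb)
    (hroot : ∀ k < N, L (k + 1) * α (k + 1) ^ 2 = A k + α (k + 1))
    (hy : ∀ k < N, y (k + 1) = (A (k + 1))⁻¹ • (α (k + 1) • u k + A k • x k))
    (hx : ∀ k < N, x (k + 1) = (A (k + 1))⁻¹ • (α (k + 1) • u (k + 1) + A k • x k))
    (hsc : ∀ a ∈ Q, ∀ b ∈ Q, 1 / 2 * ‖a - b‖ ^ 2 ≤ breg d Dd b a)
    (hmodel : ∀ k < N, ∃ (ψ : E → ℝ) (c cp : ℝ),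
      ConvexOn ℝ Q ψ ∧ ψ (y (k + 1)) = 0 ∧
      (∀ w ∈ Q, c + ψ w ≤ f w) ∧
      IsApproxMinOn Q (fun w => α (k + 1) * ψ w + breg d Dd (u k) w) δt (u (k + 1)) ∧
      f (x (k + 1)) ≤ cp + δ ∧
      cp ≤ c + ψ (x (k + 1)) + L (k + 1) / 2 * ‖x (k + 1) - y (k + 1)‖ ^ 2 + δ)
    (xs : E) (hxs : xs ∈ Q) :
    f (x N) - f xs ≤
      8 * Lb * breg d Dd (x 0) xs / (N : ℝ) ^ 2 + 2 * N * δ + 8 * Lb * δt / N := by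
  have hA_lt : ∀ k < N, A k < A (k + 1) := fun k hk => by linarith [hArec k hk, hα k hk]
  have hA_nonneg : ∀ k ≤ N, 0 ≤ A k := by
    intro k hk
    induction k with
    | zero => exact hA0.ge
    | succ k ih => exact (ih (by omega)).trans (hA_lt k (by omega)).le
  have hbreg_nonneg : ∀ k ≤ N, 0 ≤ breg d Dd (u k) xs := fun k hk =>
    (by positivity : (0 : ℝ) ≤ 1 / 2 * ‖xs - u k‖ ^ 2).trans (hsc _ hxs _ (huQ k hk))
  have hgrowth : (N : ℝ) ^ 2 ≤ 4 * (2 * Lb) * A N :=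
    sq_le_four_mul_of_le_mul_sq_sub (by positivity) hA0 hA_lt fun k hk => by
      rw [hArec k hk, add_sub_cancel_left, ← hroot k hk]
      exact mul_le_mul_of_nonneg_right (hLle k hk) (sq_nonneg _)
  have hestimate := mul_sub_add_le_of_forall_step_le (F := fun k => f (x k))
    (D := fun k => breg d Dd (u k) xs) (Fs := f xs) hA0 hδ (fun k hk => (hA_lt k hk).le)
    fun k hk => by
      obtain ⟨ψ, c, cp, hψ, -, hlow, happ, hfx, hcp⟩ := hmodel k hk
      exact fastGradient_step_le (hA_nonneg k hk.le) (hα k hk) (hArec k hk)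
        ((hroot k hk).trans (hArec k hk).symm) (hy k hk) (hx k hk) (hxQ k hk.le) (huQ _ hk) hxs
        hψ hlow (hsc _ (huQ _ hk) _ (huQ k hk.le))
        (happ.add_breg_le hQ hψ (hα k hk).le (hd_diff _) hxs) (by linarith)
  rw [← hu0]
  exact sub_le_of_mul_sub_add_le (by exact_mod_cast hN) hLb.le (by linarith)
    (hbreg_nonneg 0 (Nat.zero_le N)) (hbreg_nonneg N le_rfl) hδt hestimate

/-- Remark 3.6: convergence rate of the fast adaptive gradient method with
a `(δ, L, 0, 0, V, ‖·‖)`-model, constant errors `δ`, `δ̃` and adaptive constants `L_k ≤ 2L`. -/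
theorem stmt10
    {E : Type*} [NormedAddCommGroup E] [InnerProductSpace ℝ E] [FiniteDimensional ℝ E]
    (Q : Set E) (hQ : Convex ℝ Q)
    (d : E → ℝ) (Dd : E → E)
    (hd_conv : ConvexOn ℝ Set.univ d) (hd_diff : ∀ x, HasGradientAt d (Dd x) x)
    (f : E → ℝ) (δ δt Lb : ℝ) (hδ : 0 ≤ δ) (hδt : 0 ≤ δt) (hLb : 0 < Lb)
    (N : ℕ) (hN : 1 ≤ N)
    (x u y : ℕ → E) (A α L : ℕ → ℝ)
    (hxQ : ∀ k ≤ N, x k ∈ Q) (huQ : ∀ k ≤ N, u k ∈ Q)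
    (hA0 : A 0 = 0) (hu0 : u 0 = x 0)
    (hα : ∀ k < N, 0 < α (k + 1))
    (hArec : ∀ k < N, A (k + 1) = A k + α (k + 1))
    (hL : ∀ k < N, 0 < L (k + 1)) (hLle : ∀ k < N, L (k + 1) ≤ 2 * Lb)
    (hroot : ∀ k < N, L (k + 1) * α (k + 1) ^ 2 = A k + α (k + 1))
    (hlargest : ∀ k < N, ∀ β : ℝ, L (k + 1) * β ^ 2 = A k + β → β ≤ α (k + 1))
    (hy : ∀ k < N, y (k + 1) = (A (k + 1))⁻¹ • (α (k + 1) • u k + A k • x k))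
    (hx : ∀ k < N, x (k + 1) = (A (k + 1))⁻¹ • (α (k + 1) • u (k + 1) + A k • x k))
    (hsc : ∀ a ∈ Q, ∀ b ∈ Q, 1 / 2 * ‖a - b‖ ^ 2 ≤ breg d Dd b a)
    (hmodel : ∀ k < N, ∃ (ψ : E → ℝ) (c cp : ℝ),
      ConvexOn ℝ Q ψ ∧ ψ (y (k + 1)) = 0 ∧
      (∀ w ∈ Q, c + ψ w ≤ f w) ∧
      IsApproxMinOn Q (fun w => α (k + 1) * ψ w + breg d Dd (u k) w) δt (u (k + 1)) ∧
      f (x (k + 1)) ≤ cp + δ ∧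
      cp ≤ c + ψ (x (k + 1)) + L (k + 1) / 2 * ‖x (k + 1) - y (k + 1)‖ ^ 2 + δ)
    (xs : E) (hxs : xs ∈ Q) (hmin : ∀ w ∈ Q, f xs ≤ f w) :
    f (x N) - f xs ≤
      8 * Lb * breg d Dd (x 0) xs / (N : ℝ) ^ 2 + 2 * N * δ + 8 * Lb * δt / N :=
  stmt10_general Q hQ d Dd hd_diff f δ δt Lb hδ hδt hLb N hN x u y A α L hxQ huQ hA0 hu0 hα hArec
    hLle hroot hy hx hsc hmodel xs hxs
end

section
/- Let δ, δ̃ ≥ 0, L > 0, N ≥ 1, let Q be a convex compact set, and let ψ, ψ_δ : Q × Q → ℝ satisfy: (i) ψ(x, y) ≤ ψ_δ(x, y) + δ for all x, y ∈ Q; (ii) ψ_δ(·, y) is convex for every y ∈ Q; (iii) ψ_δ(x, x) = 0 for all x ∈ Q; (iv) ψ_δ(x, y) + ψ_δ(y, x) ≤ δ for all x, y ∈ Q; and ψ(·, y) is upper semicontinuous so that the maxima below exist. Let iterates z_k, w_k ∈ Q and 0 < L_{k+1} ≤ 2·L (k = 0, …, N−1) satisfy: w_k is a δ̃-approximate minimizer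 on Q of x ↦ ψ_δ(x, z_k) + L_{k+1}·V[z_k](x); z_{k+1} is a δ̃-approximate minimizer on Q of x ↦ ψ_δ(x, w_k) + L_{k+1}·V[z_k](x); and ψ_δ(z_{k+1}, z_k) ≤ ψ_δ(z_{k+1}, w_k) + ψ_δ(w_k, z_k) + L_{k+1}·(V[z_k](w_k) + V[w_k](z_{k+1})) + δ. Then the weighted average ŵ_N := (1/S_N)·∑_{k=0}^{N−1} w_k/L_{k+1}, where S_N := ∑_{k=0}^{N−1} 1/L_{k+1}, satisfies max_{u ∈ Q} ψ(ŵ_N, u) ≤ (2·L·max_{u ∈ Q} V[z₀](u))/N + 3·δ + 2·δ̃. -/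
open RealInnerProductSpace Finset

/-!
For approximate minimizers of `f + c • V[z]` with `f` convex one has the three-point inequality
`f y + c V[z](y) + c V[y](x) ≤ f x + c V[z](x) + δ̃`: the subgradient inequality along the segment
from `y` to `x` loses only `c V[y](y + t (x - y)) = o(t)`. Applied to both half-steps of the
Mirror-Prox iteration and combined with the line-search inequality and (iv), it gives
`ψ_δ(w_k, u) ≤ L_{k+1} (V[z_k](u) - V[z_{k+1}](u)) + 2δ + 2δ̃`. Dividing by `L_{k+1}` and summing
telescopes; Jensen's inequality for `ψ_δ(·, u)` passes to `ŵ_N`, and `S_N ≥ N / (2L)`.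
-/

open Filter Topology

section Bregman

variable {E : Type*} [NormedAddCommGroup E] [InnerProductSpace ℝ E] {d : E → ℝ} {Dd : E → E}

lemma breg_three_point (d : E → ℝ) (Dd : E → E) (z y x : E) :
    breg d Dd z x = breg d Dd z y + ⟪Dd y - Dd z, x - y⟫ + breg d Dd y x := by
  simp only [breg, inner_sub_left, inner_sub_right]
  ring

lemma continuous_breg (hd : Continuous d) (y : E) : Continuous (breg d Dd y) := by
  unfold breg
  fun_prop

variable [CompleteSpace E]

lemma HasGradientAt.hasDerivAt_line {g y : E} (hd : HasGradientAt d g y) (v : E) :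
    HasDerivAt (fun t : ℝ => d (y + t • v)) ⟪g, v⟫ 0 := by
  simpa [HasLineDerivAt] using hd.hasFDerivAt.hasLineDerivAt v

lemma breg_nonneg (hd_conv : ConvexOn ℝ Set.univ d) {y : E} (hd : HasGradientAt d (Dd y) y)
    (x : E) : 0 ≤ breg d Dd y x := by
  have hline : ConvexOn ℝ Set.univ fun t : ℝ => d (y + t • (x - y)) := by
    have hcomp : (fun t : ℝ => d (y + t • (x - y))) = d ∘ AffineMap.lineMap y x := by
      ext t
      simp [AffineMap.lineMap_apply_module', add_comm]
    simpa [hcomp] using hd_conv.comp_affineMap (AffineMap.lineMap y x)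
  have := hline.le_slope_of_hasDerivAt (Set.mem_univ 0) (Set.mem_univ 1) one_pos
    (hd.hasDerivAt_line (x - y))
  simp only [slope, sub_zero, inv_one, one_smul, add_sub_cancel, zero_smul, add_zero, vsub_eq_sub,
    smul_eq_mul, one_mul] at this
  simp only [breg]
  linarith

lemma tendsto_breg_line_div {y : E} (hd : HasGradientAt d (Dd y) y) (v : E) :
    Tendsto (fun t : ℝ => t⁻¹ * breg d Dd y (y + t • v)) (𝓝[>] 0) (𝓝 0) := by
  have h := ((hd.hasDerivAt_line v).tendsto_slope_zero_right).sub_const ⟪Dd y, v⟫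
  rw [sub_self] at h
  refine h.congr' (eventually_nhdsWithin_of_forall fun t (ht : 0 < t) => ?_)
  simp only [breg, zero_add, zero_smul, add_zero, add_sub_cancel_left, real_inner_smul_right,
    smul_eq_mul]
  field_simp

variable {Q : Set E} {f : E → ℝ} {c δ : ℝ} {z y : E}

theorem IsSubgradOn.add_breg_three_point (hQ : Convex ℝ Q) (hd : HasGradientAt d (Dd y) y)
    (hf : ConvexOn ℝ Q f) (hy : y ∈ Q) {h : E}
    (hsub : IsSubgradOn Q (fun x => f x + c * breg d Dd z x) y h) {x : E} (hx : x ∈ Q) :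
    f y + c * breg d Dd z y + ⟪h, x - y⟫ + c * breg d Dd y x ≤ f x + c * breg d Dd z x := by
  have hsegment : ∀ t ∈ Set.Ioc (0 : ℝ) 1,
      ⟪h, x - y⟫ ≤
        f x - f y + c * ⟪Dd y - Dd z, x - y⟫ + c * (t⁻¹ * breg d Dd y (y + t • (x - y))) := by
    rintro t ⟨ht₀, ht₁⟩
    have hsub_t := hsub (y + t • (x - y)) (hQ.add_smul_sub_mem hy hx ⟨ht₀.le, ht₁⟩)
    have hconv_t : f (y + t • (x - y)) ≤ (1 - t) * f y + t * f x := by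
      have := hf.2 hy hx (sub_nonneg.2 ht₁) ht₀.le (sub_add_cancel 1 t)
      rwa [show (1 - t) • y + t • x = y + t • (x - y) by module,
        smul_eq_mul, smul_eq_mul] at this
    simp only [add_sub_cancel_left, real_inner_smul_right] at hsub_t
    rw [breg_three_point d Dd z y (y + t • (x - y)), add_sub_cancel_left,
      real_inner_smul_right] at hsub_t
    have hcancel :
        t * (t⁻¹ * breg d Dd y (y + t • (x - y))) = breg d Dd y (y + t • (x - y)) := by
      field_simp
    refine le_of_mul_le_mul_left ?_ ht₀
    linear_combination hsub_t + hconv_t - c * hcancel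
  have hlimit : ⟪h, x - y⟫ ≤ f x - f y + c * ⟪Dd y - Dd z, x - y⟫ := by
    have := ((tendsto_breg_line_div hd (x - y)).const_mul c).const_add
      (f x - f y + c * ⟪Dd y - Dd z, x - y⟫)
    rw [mul_zero, add_zero] at this
    refine ge_of_tendsto this ?_
    filter_upwards [Ioc_mem_nhdsGT one_pos] with t ht
    exact hsegment t ht
  linear_combination hlimit - c * breg_three_point d Dd z y x

theorem IsApproxMinOn.add_breg_three_point (hQ : Convex ℝ Q) (hd : HasGradientAt d (Dd y) y)
    (hf : ConvexOn ℝ Q f) (hmin : IsApproxMinOn Q (fun x => f x + c * breg d Dd z x) δ y)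
    {x : E} (hx : x ∈ Q) :
    f y + c * breg d Dd z y + c * breg d Dd y x ≤ f x + c * breg d Dd z x + δ := by
  obtain ⟨hy, h, hsub, hh⟩ := hmin
  linarith [hsub.add_breg_three_point hQ hd hf hy hx, hh x hx]

end Bregman

theorem mirrorProx_step_le {E : Type*} [NormedAddCommGroup E] [InnerProductSpace ℝ E]
    [CompleteSpace E] {Q : Set E} (hQ : Convex ℝ Q) {d : E → ℝ} {Dd : E → E}
    (hd : ∀ x, HasGradientAt d (Dd x) x) {ψδ : E → E → ℝ} {c δ δt : ℝ} {z w z' u : E}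
    (hconv_z : ConvexOn ℝ Q fun x => ψδ x z) (hconv_w : ConvexOn ℝ Q fun x => ψδ x w)
    (hmono : ψδ u w + ψδ w u ≤ δ)
    (hwmin : IsApproxMinOn Q (fun x => ψδ x z + c * breg d Dd z x) δt w)
    (hzmin : IsApproxMinOn Q (fun x => ψδ x w + c * breg d Dd z x) δt z')
    (hls : ψδ z' z ≤ ψδ z' w + ψδ w z + c * (breg d Dd z w + breg d Dd w z') + δ)
    (hu : u ∈ Q) :
    ψδ w u ≤ c * (breg d Dd z u - breg d Dd z' u) + 2 * (δ + δt) := by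
  have hw := hwmin.add_breg_three_point hQ (hd w) hconv_z hzmin.1
  have hz' := hzmin.add_breg_three_point hQ (hd z') hconv_w hu
  linarith

theorem Finset.centerMass_le_of_le_mul_sub {N : ℕ} (hN : 0 < N) {c φ b : ℕ → ℝ} {ε : ℝ}
    (hc : ∀ k < N, 0 < c k) (hb : 0 ≤ b N) (h : ∀ k < N, φ k ≤ c k * (b k - b (k + 1)) + ε) :
    (range N).centerMass (fun k => 1 / c k) φ ≤ b 0 / ∑ k ∈ range N, 1 / c k + ε := by
  set S := ∑ k ∈ range N, 1 / c k
  have hS : 0 < S :=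
    sum_pos (fun k hk => one_div_pos.2 (hc k (mem_range.1 hk))) (nonempty_range_iff.2 hN.ne')
  have hweighted : ∑ k ∈ range N, 1 / c k * φ k ≤ b 0 + S * ε := by
    calc ∑ k ∈ range N, 1 / c k * φ k ≤ ∑ k ∈ range N, ((b k - b (k + 1)) + 1 / c k * ε) := by
          refine sum_le_sum fun k hk => ?_
          have hck := hc k (mem_range.1 hk)
          calc 1 / c k * φ k ≤ 1 / c k * (c k * (b k - b (k + 1)) + ε) := by
                gcongr
                exact h k (mem_range.1 hk)
            _ = _ := by field_simp
      _ = b 0 - b N + S * ε := by rw [sum_add_distrib, sum_range_sub', sum_mul]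
      _ ≤ b 0 + S * ε := by linarith
  rw [centerMass, smul_eq_mul, inv_mul_le_iff₀ hS, mul_add, mul_div_cancel₀ _ hS.ne']
  simpa [mul_comm ε] using hweighted

theorem div_sum_one_div_le {N : ℕ} (hN : 0 < N) {c : ℕ → ℝ} {M B : ℝ}
    (hc : ∀ k < N, 0 < c k) (hcM : ∀ k < N, c k ≤ M) (hB : 0 ≤ B) :
    B / ∑ k ∈ range N, 1 / c k ≤ M * B / N := by
  have hM : 0 < M := (hc 0 hN).trans_le (hcM 0 hN)
  have hsum : N * (1 / M) ≤ ∑ k ∈ range N, 1 / c k := by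
    simpa using card_nsmul_le_sum (range N) (fun k => 1 / c k) (1 / M)
      fun k hk => one_div_le_one_div_of_le (hc k (mem_range.1 hk)) (hcM k (mem_range.1 hk))
  calc B / ∑ k ∈ range N, 1 / c k ≤ B / (N * (1 / M)) :=
        div_le_div_of_nonneg_left hB (by positivity) hsum
    _ = M * B / N := by field_simp

theorem stmt12_general
    {E : Type*} [NormedAddCommGroup E] [InnerProductSpace ℝ E] [FiniteDimensional ℝ E]
    (Q : Set E) (hQ : Convex ℝ Q) (hQcomp : IsCompact Q)
    (d : E → ℝ) (Dd : E → E)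
    (hd_conv : ConvexOn ℝ Set.univ d) (hd_diff : ∀ x, HasGradientAt d (Dd x) x)
    (ψ ψδ : E → E → ℝ)
    (δ δt Lb : ℝ)
    (hi : ∀ x ∈ Q, ∀ y ∈ Q, ψ x y ≤ ψδ x y + δ)
    (hii : ∀ y ∈ Q, ConvexOn ℝ Q fun x => ψδ x y)
    (hiv : ∀ x ∈ Q, ∀ y ∈ Q, ψδ x y + ψδ y x ≤ δ)
    (N : ℕ) (hN : 1 ≤ N)
    (z w : ℕ → E) (L : ℕ → ℝ)
    (hzQ : ∀ k ≤ N, z k ∈ Q) (hwQ : ∀ k < N, w k ∈ Q)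
    (hLpos : ∀ k < N, 0 < L (k + 1)) (hLle : ∀ k < N, L (k + 1) ≤ 2 * Lb)
    (hwmin : ∀ k < N,
      IsApproxMinOn Q (fun x => ψδ x (z k) + L (k + 1) * breg d Dd (z k) x) δt (w k))
    (hzmin : ∀ k < N,
      IsApproxMinOn Q (fun x => ψδ x (w k) + L (k + 1) * breg d Dd (z k) x) δt (z (k + 1)))
    (hls : ∀ k < N,
      ψδ (z (k + 1)) (z k) ≤ ψδ (z (k + 1)) (w k) + ψδ (w k) (z k)
        + L (k + 1) * (breg d Dd (z k) (w k) + breg d Dd (w k) (z (k + 1))) + δ)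
    (wavg : E)
    (hwavg : wavg = (∑ k ∈ Finset.range N, 1 / L (k + 1))⁻¹ •
        ∑ k ∈ Finset.range N, (1 / L (k + 1)) • w k) :
    ∀ u ∈ Q,
      ψ wavg u ≤
        2 * Lb * sSup ((fun v => breg d Dd (z 0) v) '' Q) / N + 3 * δ + 2 * δt := by
  intro u hu
  replace hwavg : wavg = (range N).centerMass (fun k => 1 / L (k + 1)) w := hwavg
  have hweights : ∀ k ∈ range N, 0 ≤ 1 / L (k + 1) :=
    fun k hk => (one_div_pos.2 (hLpos k (mem_range.1 hk))).le
  have hS : 0 < ∑ k ∈ range N, 1 / L (k + 1) :=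
    sum_pos (fun k hk => one_div_pos.2 (hLpos k (mem_range.1 hk)))
      (nonempty_range_iff.2 (by omega))
  have hwQ' : ∀ k ∈ range N, w k ∈ Q := fun k hk => hwQ k (mem_range.1 hk)
  have hstep : ∀ k < N, ψδ (w k) u ≤
      L (k + 1) * (breg d Dd (z k) u - breg d Dd (z (k + 1)) u) + 2 * (δ + δt) := fun k hk =>
    mirrorProx_step_le hQ hd_diff (hii _ (hzQ k hk.le)) (hii _ (hwQ k hk))
      (hiv u hu _ (hwQ k hk)) (hwmin k hk) (hzmin k hk) (hls k hk) hu
  have hgap : ψδ wavg u ≤ breg d Dd (z 0) u / ∑ k ∈ range N, 1 / L (k + 1) + 2 * (δ + δt) :=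
    hwavg ▸ ((hii u hu).map_centerMass_le hweights hS hwQ').trans
      (centerMass_le_of_le_mul_sub hN hLpos (breg_nonneg hd_conv (hd_diff _) u) hstep)
  have hharm := div_sum_one_div_le hN hLpos hLle (breg_nonneg hd_conv (hd_diff (z 0)) u)
  have hcont : Continuous (breg d Dd (z 0)) :=
    continuous_breg (Differentiable.continuous fun x => (hd_diff x).differentiableAt) _
  have hsup : 2 * Lb * breg d Dd (z 0) u / N ≤
      2 * Lb * sSup ((fun v => breg d Dd (z 0) v) '' Q) / N := by
    have h2Lb : 0 ≤ 2 * Lb := (hLpos 0 hN).le.trans (hLle 0 hN)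
    gcongr
    exact le_csSup (hQcomp.bddAbove_image hcont.continuousOn) ⟨u, hu, rfl⟩
  linarith [hi wavg (hwavg ▸ hQ.centerMass_mem hweights hS hwQ') u hu]

/-- Theorem 4.5, merit-function bound: the weighted average of the iterates
of the generalized Mirror-Prox method with a `(δ, L, V)`-model bounds the gap function of
the abstract variational inequality. -/
theorem stmt12
    {E : Type*} [NormedAddCommGroup E] [InnerProductSpace ℝ E] [FiniteDimensional ℝ E]
    (Q : Set E) (hQ : Convex ℝ Q) (hQcomp : IsCompact Q) (hQne : Q.Nonempty)
    (d : E → ℝ) (Dd : E → E)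
    (hd_conv : ConvexOn ℝ Set.univ d) (hd_diff : ∀ x, HasGradientAt d (Dd x) x)
    (ψ ψδ : E → E → ℝ)
    (δ δt Lb : ℝ) (hδ : 0 ≤ δ) (hδt : 0 ≤ δt) (hLb : 0 < Lb)
    (hi : ∀ x ∈ Q, ∀ y ∈ Q, ψ x y ≤ ψδ x y + δ)
    (hii : ∀ y ∈ Q, ConvexOn ℝ Q fun x => ψδ x y)
    (hiii : ∀ x ∈ Q, ψδ x x = 0)
    (hiv : ∀ x ∈ Q, ∀ y ∈ Q, ψδ x y + ψδ y x ≤ δ)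
    (husc : ∀ y ∈ Q, UpperSemicontinuousOn (fun x => ψ x y) Q)
    (N : ℕ) (hN : 1 ≤ N)
    (z w : ℕ → E) (L : ℕ → ℝ)
    (hzQ : ∀ k ≤ N, z k ∈ Q) (hwQ : ∀ k < N, w k ∈ Q)
    (hLpos : ∀ k < N, 0 < L (k + 1)) (hLle : ∀ k < N, L (k + 1) ≤ 2 * Lb)
    (hwmin : ∀ k < N,
      IsApproxMinOn Q (fun x => ψδ x (z k) + L (k + 1) * breg d Dd (z k) x) δt (w k))
    (hzmin : ∀ k < N,
      IsApproxMinOn Q (fun x => ψδ x (w k) + L (k + 1) * breg d Dd (z k) x) δt (z (k + 1)))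
    (hls : ∀ k < N,
      ψδ (z (k + 1)) (z k) ≤ ψδ (z (k + 1)) (w k) + ψδ (w k) (z k)
        + L (k + 1) * (breg d Dd (z k) (w k) + breg d Dd (w k) (z (k + 1))) + δ)
    (wavg : E)
    (hwavg : wavg = (∑ k ∈ Finset.range N, 1 / L (k + 1))⁻¹ •
        ∑ k ∈ Finset.range N, (1 / L (k + 1)) • w k) :
    ∀ u ∈ Q,
      ψ wavg u ≤
        2 * Lb * sSup ((fun v => breg d Dd (z 0) v) '' Q) / N + 3 * δ + 2 * δt :=
  stmt12_general Q hQ hQcomp d Dd hd_conv hd_diff ψ ψδ δ δt Lb hi hii hiv N hN z w L hzQ hwQ hLpos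
    hLle hwmin hzmin hls wavg hwavg
end
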